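/- Let α be a nonempty finite type and let f : Finset α → ℝ be monotone (S ⊆ T implies f(S) ≤ f(T)), submodular, and normalized (f(∅) = 0). Let M ≥ 1 be a natural number and let S₀ = ∅, S_{k+1} = S_k ∪ {x_k} be a greedy sequence, where at each step x_k maximizes f(S_k ∪ {x}) over all x ∈ α. Then for every finset T with |T| ≤ M, f(S_M) ≥ (1 − (1 − 1/M)^M) · f(T), and since (1 − 1/M)^M ≤ 1/e, in particular f(S_M) ≥ (1 − 1/e) · f(T). -/
import Mathlib


/-- **Greedy approximation guarantee (Nemhauser–Wolsey–Fisher).** Let `f` be a monotone,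
submodular, normalized set function on a nonempty finite type `α`, let `M ≥ 1`, and let
`S₀ = ∅`, `S_{k+1} = S_k ∪ {x_k}` be a greedy sequence where each `x_k` maximizes
`f(S_k ∪ {x})`. Then for every finset `T` with `|T| ≤ M`,
`f(S_M) ≥ (1 − (1 − 1/M)^M) · f(T)`, and in particular `f(S_M) ≥ (1 − 1/e) · f(T)`. -/
theorem greedy_submodular_approximation {α : Type*} [Fintype α] [Nonempty α]
    [DecidableEq α]
    (f : Finset α → ℝ)
    (hmono : ∀ S T : Finset α, S ⊆ T → f S ≤ f T)
    (hsub : ∀ S T : Finset α, f (S ∪ T) + f (S ∩ T) ≤ f S + f T)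
    (hnorm : f ∅ = 0)
    (M : ℕ) (hM : 1 ≤ M)
    (S : ℕ → Finset α) (x : ℕ → α)
    (hS0 : S 0 = ∅)
    (hSsucc : ∀ k, S (k + 1) = insert (x k) (S k))
    (hgreedy : ∀ k, ∀ y : α, f (insert y (S k)) ≤ f (insert (x k) (S k))) :
    ∀ T : Finset α, T.card ≤ M →
      f (S M) ≥ (1 - (1 - 1 / (M : ℝ)) ^ M) * f T ∧
        f (S M) ≥ (1 - 1 / Real.exp 1) * f T := by
  intro T hT
  have hM0 : (0:ℝ) < M := by exact_mod_cast hM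
  have hMne : (M:ℝ) ≠ 0 := ne_of_gt hM0
  set c : ℝ := 1 - 1/(M:ℝ) with hc
  have hc0 : 0 ≤ c := by
    have h1 : 1/(M:ℝ) ≤ 1 := by
      rw [div_le_one hM0]; exact_mod_cast hM
    simp only [hc]; linarith
  have hfT0 : 0 ≤ f T := by
    have h := hmono ∅ T (Finset.empty_subset T)
    linarith [hnorm]
  -- submodular sum bound
  have hsum : ∀ (A B : Finset α), f (A ∪ B) ≤ f A + ∑ y ∈ B, (f (insert y A) - f A) := by
    intro A B
    induction B using Finset.induction_on with
    | empty => simp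
    | @insert a B' ha ih =>
        have h1 : A ∪ insert a B' = (A ∪ B') ∪ insert a A := by
          ext z; simp; tauto
        have h2 := hsub (A ∪ B') (insert a A)
        have h3 : A ⊆ (A ∪ B') ∩ insert a A :=
          Finset.subset_inter Finset.subset_union_left (Finset.subset_insert _ _)
        have h4 := hmono _ _ h3
        rw [Finset.sum_insert ha, h1]
        linarith
  -- per-step inequality
  have hstep : ∀ k, f T - f (S k) ≤ (M:ℝ) * (f (S (k+1)) - f (S k)) := by
    intro k
    have hE := hSsucc k
    have hΔ0 : f (S k) ≤ f (S (k+1)) := by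
      rw [hE]; exact hmono _ _ (Finset.subset_insert _ _)
    have h1 : f T ≤ f (S k ∪ T) := hmono _ _ Finset.subset_union_right
    have h2 := hsum (S k) T
    have h3 : ∑ y ∈ T, (f (insert y (S k)) - f (S k))
        ≤ (T.card : ℝ) * (f (S (k+1)) - f (S k)) := by
      rw [hE]
      calc ∑ y ∈ T, (f (insert y (S k)) - f (S k))
          ≤ ∑ _y ∈ T, (f (insert (x k) (S k)) - f (S k)) := by
            exact Finset.sum_le_sum fun y _ => by linarith [hgreedy k y]
        _ = (T.card : ℝ) * (f (insert (x k) (S k)) - f (S k)) := by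
            rw [Finset.sum_const, nsmul_eq_mul]
    have h4 : (T.card:ℝ) * (f (S (k+1)) - f (S k)) ≤ (M:ℝ) * (f (S (k+1)) - f (S k)) := by
      apply mul_le_mul_of_nonneg_right _ (by linarith)
      exact_mod_cast hT
    linarith
  -- main induction
  have hkey : ∀ k, f T - f (S k) ≤ c^k * f T := by
    intro k
    induction k with
    | zero => simp [hS0, hnorm]
    | succ k ih =>
        have h := hstep k
        have hinv : (0:ℝ) ≤ 1/(M:ℝ) := by positivity
        have h' := mul_le_mul_of_nonneg_left h hinv
        have heq : (1/(M:ℝ)) * ((M:ℝ) * (f (S (k+1)) - f (S k)))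
            = f (S (k+1)) - f (S k) := by field_simp
        rw [heq] at h'
        have hcc : f T - f (S (k+1)) ≤ c * (f T - f (S k)) := by
          have hd : c * (f T - f (S k)) = (f T - f (S k)) - 1/(M:ℝ) * (f T - f (S k)) := by
            simp only [hc]; ring
          rw [hd]; linarith
        have := mul_le_mul_of_nonneg_left ih hc0
        calc f T - f (S (k+1)) ≤ c * (f T - f (S k)) := hcc
          _ ≤ c * (c^k * f T) := this
          _ = c^(k+1) * f T := by ring
  have hmain : f (S M) ≥ (1 - c^M) * f T := by
    have h := hkey M
    nlinarith [h]
  refine ⟨hmain, ?_⟩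
  have hle : c ≤ Real.exp (-(1/(M:ℝ))) := by
    have := Real.add_one_le_exp (-(1/(M:ℝ)))
    simp only [hc]; linarith
  have hpow : c^M ≤ (Real.exp (-(1/(M:ℝ))))^M := pow_le_pow_left₀ hc0 hle M
  have hexp : (Real.exp (-(1/(M:ℝ))))^M = Real.exp (-1) := by
    rw [← Real.exp_nat_mul]
    congr 1
    field_simp
  have hcm : c^M ≤ 1 / Real.exp 1 := by
    rw [hexp] at hpow
    rw [Real.exp_neg] at hpow
    rw [one_div]
    exact hpow
  have : (1 - 1 / Real.exp 1) * f T ≤ (1 - c^M) * f T :=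
    mul_le_mul_of_nonneg_right (by linarith) hfT0
  linarith [hmain]
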